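/- arXiv:2406.00147 — 4 statements merged into one kernel-verified Lean document; each statement's English description precedes it below -/
import Mathlib

section
/- Consider the group-level static fair allocation problem. Let μ₁ and μ₂ be Borel probability measures on compact intervals [a₁,b₁] and [a₂,b₂] respectively, each with a continuous strictly positive density, let μ = μ₁ ⊗ μ₂ be their product measure on ℝ², let φ₁ and φ₂ be continuous strictly increasing real functions on [a₁,b₁] and [a₂,b₂] respectively, and let α₁, α₂ ≥ 0 with α₁ + α₂ ≤ 1. Suppose (G₁, G₂) is a pair of disjoint Borel subsets of ℝ² with μ(Gᵢ) ≥ αᵢ for i = 1,2 that maximizes the objective W(G₁,G₂) = ∫_{G₁} φ₁(v₁) dμ(v₁,v₂) + ∫_{G₂} φ₂(v₂) dμ(v₁,v₂) over all pairs of disjoint Borel sets satisfying these measure constraints. Then there exist η₁, η₂ ≥ 0 and γ ∈ ℝ with η₂ = η₁ + γ such that, up to μ-null sets, G₁ = {(v₁,v₂) : φ₁(v₁) ≥ φ₂(v₂) + γ and φ₁(v₁) ≥ −η₁} and G₂ = {(v₁,v₂) : φ₂(v₂) ≥ φ₁(v₁) − γ and φ₂(v₂) ≥ −η₂}. -/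
/-!
Dualize the two fairness constraints with multipliers `ηᵢ ≥ 0`. For fixed multipliers the
Lagrangian is maximized pointwise by giving the item to the group with the larger adjusted virtual
value `φᵢ + ηᵢ`, or to nobody if both are negative. The resulting dual function
`∫ max (φ₁ + η₁) (max (φ₂ + η₂) 0) - α₁ η₁ - α₂ η₂` is convex, and its one-sided partial
derivatives are `μ Sᵢ - αᵢ`, where `Sᵢ` is the region won by group `i`. A minimizer over `η ≥ 0`
therefore satisfies feasibility and complementary slackness; it exists by coercivity when
`α₁ + α₂ < 1`, and when `α₁ + α₂ = 1` suitable multipliers come instead from the intermediate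
value theorem for the distribution function of `φ₁ - φ₂`. Weak duality then forces any optimal
allocation to agree with `(S₁, S₂)` wherever the three values `φ₁ + η₁`, `φ₂ + η₂`, `0` are
distinct, and ties are null because the `φᵢ` are strictly increasing and the marginals have
densities.
-/

open MeasureTheory Set Filter ProbabilityTheory

section Threshold

variable {X : Type*} [MeasurableSpace X] {μ : Measure X}

theorem continuousAt_measureReal_le [IsProbabilityMeasure μ] {k : X → ℝ} (hk : Measurable k)
    {l : ℝ} (hl : μ {x | k x = l} = 0) :
    ContinuousAt (fun r => μ.real {x | k x ≤ r}) l := by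
  have := Measure.isProbabilityMeasure_map (μ := μ) hk.aemeasurable
  have hcdf : (fun r => μ.real {x | k x ≤ r}) = cdf (μ.map k) := by
    ext r
    rw [cdf_eq_real, map_measureReal_apply hk measurableSet_Iic]
    rfl
  have hatom : (cdf (μ.map k)).measure {l} = 0 := by
    rw [measure_cdf, Measure.map_apply hk (measurableSet_singleton l)]
    exact hl
  rw [StieltjesFunction.measure_singleton, ENNReal.ofReal_eq_zero, sub_nonpos] at hatom
  rw [hcdf, (monotone_cdf _).continuousAt_iff_leftLim_eq_rightLim,
    StieltjesFunction.rightLim_eq]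
  exact le_antisymm ((monotone_cdf _).leftLim_le le_rfl) hatom

theorem ite_le_max_sub_max {r s : ℝ} (hrs : r ≤ s) (y : ℝ) :
    (if y ≤ r then s - r else 0) ≤ max s y - max r y := by
  split_ifs with hy
  · rw [max_eq_left (hy.trans hrs), max_eq_left hy]
  · exact sub_nonneg.2 (max_le_max_right y hrs)

theorem max_sub_max_le_ite {r s : ℝ} (hrs : r ≤ s) (y : ℝ) :
    max s y - max r y ≤ if y ≤ s then s - r else 0 := by
  split_ifs with hy
  · linarith [max_eq_left hy, le_max_left r y]
  · rw [max_eq_right (not_le.1 hy).le, max_eq_right (hrs.trans (not_le.1 hy).le), sub_self]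

section Finite

variable [IsFiniteMeasure μ] {k : X → ℝ}

theorem integrable_max_const (hki : Integrable k μ) (r : ℝ) :
    Integrable (fun x => max r (k x)) μ :=
  (integrable_const r).sup hki

theorem mul_measureReal_le_integral_max_sub (hkm : Measurable k) (hki : Integrable k μ)
    {r s : ℝ} (hrs : r ≤ s) :
    (s - r) * μ.real {x | k x ≤ r} ≤ ∫ x, max s (k x) ∂μ - ∫ x, max r (k x) ∂μ := by
  have hmax := integrable_max_const hki
  rw [← integral_sub (hmax s) (hmax r), mul_comm, ← smul_eq_mul,
    ← integral_indicator_const _ (measurableSet_le hkm measurable_const)]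
  refine integral_mono ((integrable_const _).indicator (measurableSet_le hkm measurable_const))
    ((hmax s).sub (hmax r)) fun x => ?_
  simpa only [indicator_apply, mem_ofPred_eq] using ite_le_max_sub_max hrs (k x)

theorem integral_max_sub_le_mul_measureReal (hkm : Measurable k) (hki : Integrable k μ)
    {r s : ℝ} (hrs : r ≤ s) :
    ∫ x, max s (k x) ∂μ - ∫ x, max r (k x) ∂μ ≤ (s - r) * μ.real {x | k x ≤ s} := by
  have hmax := integrable_max_const hki
  rw [← integral_sub (hmax s) (hmax r), mul_comm, ← smul_eq_mul,
    ← integral_indicator_const _ (measurableSet_le hkm measurable_const)]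
  refine integral_mono ((hmax s).sub (hmax r))
    ((integrable_const _).indicator (measurableSet_le hkm measurable_const)) fun x => ?_
  simpa only [indicator_apply, mem_ofPred_eq] using max_sub_max_le_ite hrs (k x)

end Finite

/-- The right and left derivatives of `r ↦ ∫ max r k` are the distribution function of `k`
at `r` and its left limit, which agree at `l` because `k` has no atom there. -/
theorem kkt_of_isMinOn_integral_max [IsProbabilityMeasure μ] {k : X → ℝ} (hkm : Measurable k)
    (hki : Integrable k μ) {α l : ℝ} (hl : 0 ≤ l) (hatom : μ {x | k x = l} = 0)
    (hmin : IsMinOn (fun r => ∫ x, max r (k x) ∂μ - α * r) (Ici 0) l) :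
    α ≤ μ.real {x | k x ≤ l} ∧ (l = 0 ∨ μ.real {x | k x ≤ l} = α) := by
  have hcont := continuousAt_measureReal_le hkm hatom
  have above : ∀ r ∈ Ioi l, α ≤ μ.real {x | k x ≤ r} := by
    intro r hr
    have hslope := integral_max_sub_le_mul_measureReal hkm hki (le_of_lt hr)
    have := hmin (show r ∈ Ici 0 from hl.trans (le_of_lt hr))
    simp only [mem_ofPred_eq] at this
    nlinarith [sub_pos.2 (mem_Ioi.1 hr)]
  have below : ∀ r ∈ Ioo 0 l, μ.real {x | k x ≤ r} ≤ α := by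
    intro r hr
    have hslope := mul_measureReal_le_integral_max_sub hkm hki (le_of_lt hr.2)
    have := hmin (show r ∈ Ici 0 from le_of_lt hr.1)
    simp only [mem_ofPred_eq] at this
    nlinarith [sub_pos.2 hr.2]
  have hfeas : α ≤ μ.real {x | k x ≤ l} :=
    ge_of_tendsto (hcont.mono_left nhdsWithin_le_nhds) (eventually_nhdsWithin_of_forall above)
  refine ⟨hfeas, hl.eq_or_lt.imp Eq.symm fun hpos => le_antisymm ?_ hfeas⟩
  exact le_of_tendsto (hcont.mono_left nhdsWithin_le_nhds)
    (eventually_of_mem (Ioo_mem_nhdsLT hpos) below)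

end Threshold

section FairAllocation

variable {X : Type*}

/-- `g x + l` and `h x + m` are the adjusted virtual values of the two groups at `x`; `0` is the
value of keeping the item. -/
def adjustedMax (g h : X → ℝ) (l m : ℝ) (x : X) : ℝ := max (g x + l) (max (h x + m) 0)

def winRegion (g h : X → ℝ) (l m : ℝ) : Set X := {x | max (h x + m) 0 ≤ g x + l}

noncomputable def lagrangian (g h : X → ℝ) (l m : ℝ) (A B : Set X) (x : X) : ℝ :=
  A.indicator (fun x => g x + l) x + B.indicator (fun x => h x + m) x

section Pointwise

variable {g h : X → ℝ}

theorem adjustedMax_comm (l m : ℝ) : adjustedMax h g m l = adjustedMax g h l m := by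
  ext x
  exact max_left_comm _ _ _

theorem adjustedMax_eq_add_max (l m : ℝ) (x : X) :
    adjustedMax g h l m x = g x + max l (max (h x + m) 0 - g x) := by
  rw [adjustedMax, ← max_add_add_left, add_sub_cancel, add_comm]

theorem abs_adjustedMax_sub_le (l m l' m' : ℝ) (x : X) :
    |adjustedMax g h l m x - adjustedMax g h l' m' x| ≤ max |l - l'| |m - m'| := by
  refine (abs_max_sub_max_le_max _ _ _ _).trans (max_le_max (by rw [add_sub_add_left_eq_sub]) ?_)
  refine (abs_max_sub_max_le_max _ _ _ _).trans ?_
  rw [add_sub_add_left_eq_sub, sub_self, abs_zero]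
  exact max_le le_rfl (abs_nonneg _)

theorem add_mul_le_adjustedMax {w₁ w₂ : ℝ} (hw₁ : 0 ≤ w₁) (hw₂ : 0 ≤ w₂) (hw : w₁ + w₂ ≤ 1)
    (l m : ℝ) (x : X) : w₁ * (g x + l) + w₂ * (h x + m) ≤ adjustedMax g h l m x := by
  have h₁ : g x + l ≤ adjustedMax g h l m x := le_max_left _ _
  have h₂ : h x + m ≤ adjustedMax g h l m x := (le_max_left _ _).trans (le_max_right _ _)
  have h₀ : 0 ≤ adjustedMax g h l m x := (le_max_right _ _).trans (le_max_right _ _)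
  nlinarith [mul_le_mul_of_nonneg_left h₁ hw₁, mul_le_mul_of_nonneg_left h₂ hw₂]

theorem lagrangian_le_adjustedMax {A B : Set X} (hAB : Disjoint A B) (l m : ℝ) (x : X) :
    lagrangian g h l m A B x ≤ adjustedMax g h l m x := by
  classical
  have hAB' : x ∈ A → x ∉ B := fun hA => hAB.notMem_of_mem_left hA
  simp only [lagrangian, adjustedMax, indicator_apply]
  split_ifs <;> grind

theorem lagrangian_winRegion_eq (l m : ℝ) (x : X) :
    lagrangian g h l m (winRegion g h l m) (winRegion h g m l \ winRegion g h l m) x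
      = adjustedMax g h l m x := by
  classical
  simp only [lagrangian, adjustedMax, winRegion, indicator_apply, Set.mem_sdiff, mem_ofPred_eq]
  split_ifs <;> grind

theorem mem_winRegion_iff_of_lagrangian_eq {A B : Set X} (hAB : Disjoint A B) {l m : ℝ} {x : X}
    (hgh : g x + l ≠ h x + m) (hg : g x + l ≠ 0) (hh : h x + m ≠ 0)
    (heq : lagrangian g h l m A B x = adjustedMax g h l m x) :
    (x ∈ A ↔ x ∈ winRegion g h l m) ∧ (x ∈ B ↔ x ∈ winRegion h g m l) := by
  classical
  have hAB' : x ∈ A → x ∉ B := fun hA => hAB.notMem_of_mem_left hA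
  simp only [lagrangian, adjustedMax, indicator_apply] at heq
  simp only [winRegion, mem_ofPred_eq, max_le_iff]
  split_ifs at heq <;> grind

end Pointwise

variable [MeasurableSpace X] {μ : Measure X}

/-- The Lagrangian dual of the fair allocation problem: `∫ adjustedMax` is the supremum of the
Lagrangian over all allocations. -/
noncomputable def dualFn (μ : Measure X) (g h : X → ℝ) (α β l m : ℝ) : ℝ :=
  ∫ x, adjustedMax g h l m x ∂μ - α * l - β * m

/-- `l` is a Karush–Kuhn–Tucker multiplier for the constraint `α ≤ μ A` of the group with
virtual value `g`, given the multiplier `m` of the other group. -/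
def IsShadowPrice (μ : Measure X) (g h : X → ℝ) (α l m : ℝ) : Prop :=
  0 ≤ l ∧ α ≤ μ.real (winRegion g h l m) ∧ (l = 0 ∨ μ.real (winRegion g h l m) = α)

noncomputable def virtualSurplus (μ : Measure X) (g h : X → ℝ) (A B : Set X) : ℝ :=
  ∫ x in A, g x ∂μ + ∫ x in B, h x ∂μ

variable {g h : X → ℝ}

theorem dualFn_comm (α β l m : ℝ) : dualFn μ h g β α m l = dualFn μ g h α β l m := by
  rw [dualFn, dualFn, adjustedMax_comm]
  ring

theorem measurableSet_winRegion (hg : Measurable g) (hh : Measurable h) (l m : ℝ) :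
    MeasurableSet (winRegion g h l m) :=
  measurableSet_le ((hh.add_const m).max measurable_const) (hg.add_const l)

theorem measure_winRegion_inter_winRegion {l m : ℝ} (hgh_atom : μ {x | g x - h x = m - l} = 0) :
    μ (winRegion g h l m ∩ winRegion h g m l) = 0 :=
  measure_mono_null (fun x ⟨(hx₁ : max (h x + m) 0 ≤ g x + l),
      (hx₂ : max (g x + l) 0 ≤ h x + m)⟩ => show g x - h x = m - l by
    linarith [(le_max_left _ _).trans hx₁, (le_max_left _ _).trans hx₂]) hgh_atom

section Finite

variable [IsFiniteMeasure μ]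

theorem integrable_adjustedMax (hg : Integrable g μ) (hh : Integrable h μ) (l m : ℝ) :
    Integrable (adjustedMax g h l m) μ :=
  (hg.add (integrable_const l)).sup ((hh.add (integrable_const m)).sup (integrable_const 0))

theorem integrable_lagrangian (hg : Integrable g μ) (hh : Integrable h μ)
    {A B : Set X} (hA : MeasurableSet A) (hB : MeasurableSet B) (l m : ℝ) :
    Integrable (lagrangian g h l m A B) μ :=
  ((hg.add (integrable_const l)).indicator hA).add ((hh.add (integrable_const m)).indicator hB)

theorem integral_lagrangian (hg : Integrable g μ) (hh : Integrable h μ)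
    {A B : Set X} (hA : MeasurableSet A) (hB : MeasurableSet B) (l m : ℝ) :
    ∫ x, lagrangian g h l m A B x ∂μ = virtualSurplus μ g h A B + l * μ.real A + m * μ.real B := by
  have hgl : Integrable (fun x => g x + l) μ := hg.add (integrable_const l)
  have hhm : Integrable (fun x => h x + m) μ := hh.add (integrable_const m)
  simp only [lagrangian, virtualSurplus]
  rw [integral_add (hgl.indicator hA) (hhm.indicator hB), integral_indicator hA,
    integral_indicator hB, integral_add hg.integrableOn (integrable_const l),
    integral_add hh.integrableOn (integrable_const m), setIntegral_const, setIntegral_const,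
    smul_eq_mul, smul_eq_mul]
  ring

/-- Weak duality squeezes an optimal allocation between the Lagrangian of the threshold
allocation and `∫ adjustedMax`, so its Lagrangian integrand equals `adjustedMax` almost
everywhere, which pins down the allocation off the null set of ties. -/
theorem ae_eq_winRegion_of_optimal (hg : Measurable g) (hh : Measurable h)
    (hgi : Integrable g μ) (hhi : Integrable h μ) {α β l m : ℝ}
    (hg_atom : μ {x | g x = -l} = 0) (hh_atom : μ {x | h x = -m} = 0)
    (hgh_atom : μ {x | g x - h x = m - l} = 0)
    (hl : IsShadowPrice μ g h α l m) (hm : IsShadowPrice μ h g β m l)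
    {G₁ G₂ : Set X} (hG₁ : MeasurableSet G₁) (hG₂ : MeasurableSet G₂) (hdisj : Disjoint G₁ G₂)
    (hfair₁ : α ≤ μ.real G₁) (hfair₂ : β ≤ μ.real G₂)
    (hopt : ∀ A B, MeasurableSet A → MeasurableSet B → Disjoint A B → α ≤ μ.real A →
      β ≤ μ.real B → virtualSurplus μ g h A B ≤ virtualSurplus μ g h G₁ G₂) :
    G₁ =ᵐ[μ] winRegion g h l m ∧ G₂ =ᵐ[μ] winRegion h g m l := by
  set S₁ := winRegion g h l m
  set S₂ := winRegion h g m l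
  have hS₁ : MeasurableSet S₁ := measurableSet_winRegion hg hh l m
  have hS₂ : MeasurableSet S₂ := measurableSet_winRegion hh hg m l
  have hS₂S₁ : μ.real (S₂ \ S₁) = μ.real S₂ := by
    have hinter : μ (S₂ ∩ S₁) = 0 := inter_comm S₁ S₂ ▸ measure_winRegion_inter_winRegion hgh_atom
    rw [measureReal_def, measureReal_def, measure_sdiff_null' hinter]
  have hslack₁ : l * μ.real S₁ ≤ l * μ.real G₁ := by
    rcases hl.2.2 with h0 | hS
    · simp [h0]
    · exact hS ▸ mul_le_mul_of_nonneg_left hfair₁ hl.1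
  have hslack₂ : m * μ.real (S₂ \ S₁) ≤ m * μ.real G₂ := by
    rcases hm.2.2 with h0 | hS
    · simp [h0]
    · exact hS₂S₁ ▸ hS ▸ mul_le_mul_of_nonneg_left hfair₂ hm.1
  have hsurplus := hopt S₁ (S₂ \ S₁) hS₁ (hS₂.diff hS₁) disjoint_sdiff_right hl.2.1
    (hS₂S₁ ▸ hm.2.1)
  have hJ := integrable_adjustedMax hgi hhi l m
  have hLG := integrable_lagrangian hgi hhi hG₁ hG₂ l m
  have hdual : ∫ x, adjustedMax g h l m x ∂μ ≤ ∫ x, lagrangian g h l m G₁ G₂ x ∂μ :=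
    calc ∫ x, adjustedMax g h l m x ∂μ = ∫ x, lagrangian g h l m S₁ (S₂ \ S₁) x ∂μ := by
          simp only [lagrangian_winRegion_eq, S₁, S₂]
      _ = virtualSurplus μ g h S₁ (S₂ \ S₁) + l * μ.real S₁ + m * μ.real (S₂ \ S₁) :=
          integral_lagrangian hgi hhi hS₁ (hS₂.diff hS₁) l m
      _ ≤ virtualSurplus μ g h G₁ G₂ + l * μ.real G₁ + m * μ.real G₂ := by linarith
      _ = ∫ x, lagrangian g h l m G₁ G₂ x ∂μ := (integral_lagrangian hgi hhi hG₁ hG₂ l m).symm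
  have hgap : ∫ x, adjustedMax g h l m x - lagrangian g h l m G₁ G₂ x ∂μ = 0 := by
    rw [integral_sub hJ hLG]
    linarith [integral_mono hLG hJ (lagrangian_le_adjustedMax hdisj l m)]
  have hLJ : ∀ᵐ x ∂μ, lagrangian g h l m G₁ G₂ x = adjustedMax g h l m x := by
    filter_upwards [(integral_eq_zero_iff_of_nonneg (fun x => sub_nonneg.2
      (lagrangian_le_adjustedMax hdisj l m x)) (hJ.sub hLG)).1 hgap] with x hx
    exact (sub_eq_zero.1 hx).symm
  have hmem : ∀ᵐ x ∂μ, (x ∈ G₁ ↔ x ∈ S₁) ∧ (x ∈ G₂ ↔ x ∈ S₂) := by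
    filter_upwards [hLJ, measure_eq_zero_iff_ae_notMem.1 hgh_atom,
      measure_eq_zero_iff_ae_notMem.1 hg_atom, measure_eq_zero_iff_ae_notMem.1 hh_atom]
      with x hx h₁₂ h₁ h₂
    exact mem_winRegion_iff_of_lagrangian_eq hdisj
      (fun e => h₁₂ (show g x - h x = m - l by linarith))
      (fun e => h₁ (show g x = -l by linarith)) (fun e => h₂ (show h x = -m by linarith)) hx
  exact ⟨eventuallyEq_set.2 (hmem.mono fun _ => And.left),
    eventuallyEq_set.2 (hmem.mono fun _ => And.right)⟩

end Finite

variable [IsProbabilityMeasure μ]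

theorem isShadowPrice_of_isMinOn (hg : Measurable g) (hh : Measurable h)
    (hgi : Integrable g μ) (hhi : Integrable h μ) {α β l m : ℝ} (hl : 0 ≤ l)
    (hg_atom : μ {x | g x = -l} = 0) (hgh_atom : μ {x | g x - h x = m - l} = 0)
    (hmin : IsMinOn (fun r => dualFn μ g h α β r m) (Ici 0) l) :
    IsShadowPrice μ g h α l m := by
  set k : X → ℝ := fun x => max (h x + m) 0 - g x
  have hkm : Measurable k := ((hh.add_const m).max measurable_const).sub hg
  have hki : Integrable k μ := ((hhi.add (integrable_const m)).sup (integrable_const 0)).sub hgi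
  have hdual : ∀ r, dualFn μ g h α β r m =
      ∫ x, g x ∂μ - β * m + (∫ x, max r (k x) ∂μ - α * r) := by
    intro r
    simp only [dualFn, adjustedMax_eq_add_max]
    rw [integral_add hgi (integrable_max_const hki r)]
    ring
  have hmin' : IsMinOn (fun r => ∫ x, max r (k x) ∂μ - α * r) (Ici 0) l := fun r hr => by
    have := hmin hr
    simp only [mem_ofPred_eq, hdual] at this ⊢
    linarith
  have hatom : μ {x | k x = l} = 0 := by
    refine measure_mono_null (fun x (hx : k x = l) => ?_) (measure_union_null hgh_atom hg_atom)
    rcases max_choice (h x + m) 0 with hmax | hmax <;> simp only [k, hmax] at hx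
    · left; simp only [mem_ofPred_eq]; linarith
    · right; simp only [mem_ofPred_eq]; linarith
  have hregion : winRegion g h l m = {x | k x ≤ l} := by
    ext x
    exact (sub_le_iff_le_add' (a := max (h x + m) 0)).symm
  rw [IsShadowPrice, hregion]
  exact ⟨hl, kkt_of_isMinOn_integral_max hkm hki hl hatom hmin'⟩

theorem lipschitzWith_integral_adjustedMax (hg : Integrable g μ) (hh : Integrable h μ) :
    LipschitzWith 1 fun p : ℝ × ℝ => ∫ x, adjustedMax g h p.1 p.2 x ∂μ := by
  refine LipschitzWith.of_dist_le_mul fun p q => ?_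
  rw [NNReal.coe_one, one_mul, Real.dist_eq, ← integral_sub (integrable_adjustedMax hg hh _ _)
    (integrable_adjustedMax hg hh _ _)]
  calc |∫ x, adjustedMax g h p.1 p.2 x - adjustedMax g h q.1 q.2 x ∂μ|
      ≤ ∫ _, dist p q ∂μ := by
        refine abs_integral_le_integral_abs.trans (integral_mono_of_nonneg
          (Eventually.of_forall fun x => abs_nonneg _) (integrable_const _)
          (Eventually.of_forall fun x => ?_))
        simpa only [Prod.dist_eq, Real.dist_eq] using abs_adjustedMax_sub_le p.1 p.2 q.1 q.2 x
    _ = dist p q := by simp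

theorem le_integral_adjustedMax (hg : Integrable g μ) (hh : Integrable h μ) {w₁ w₂ : ℝ}
    (hw₁ : 0 ≤ w₁) (hw₂ : 0 ≤ w₂) (hw : w₁ + w₂ ≤ 1) (l m : ℝ) :
    w₁ * (∫ x, g x ∂μ + l) + w₂ * (∫ x, h x ∂μ + m) ≤ ∫ x, adjustedMax g h l m x ∂μ := by
  have hgl : Integrable (fun x => g x + l) μ := hg.add (integrable_const l)
  have hhm : Integrable (fun x => h x + m) μ := hh.add (integrable_const m)
  have hlin : ∫ x, w₁ * (g x + l) + w₂ * (h x + m) ∂μ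
      = w₁ * (∫ x, g x ∂μ + l) + w₂ * (∫ x, h x ∂μ + m) := by
    rw [integral_add (hgl.const_mul w₁) (hhm.const_mul w₂), integral_const_mul,
      integral_const_mul, integral_add hg (integrable_const l),
      integral_add hh (integrable_const m)]
    simp
  rw [← hlin]
  exact integral_mono ((hgl.const_mul w₁).add (hhm.const_mul w₂))
    (integrable_adjustedMax hg hh l m) fun x => add_mul_le_adjustedMax hw₁ hw₂ hw l m x

/-- When `α + β < 1` the dual grows at least like `(1 - α - β) / 2 * ‖(l, m)‖`. -/
theorem exists_isMinOn_dualFn (hg : Integrable g μ) (hh : Integrable h μ)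
    {α β : ℝ} (hα : 0 ≤ α) (hβ : 0 ≤ β) (hαβ : α + β < 1) :
    ∃ p ∈ Ici (0 : ℝ × ℝ), IsMinOn (fun p : ℝ × ℝ => dualFn μ g h α β p.1 p.2) (Ici 0) p := by
  set D : ℝ × ℝ → ℝ := fun p => dualFn μ g h α β p.1 p.2
  have hD : Continuous D :=
    ((lipschitzWith_integral_adjustedMax hg hh).continuous.sub
      (continuous_const.mul continuous_fst)).sub (continuous_const.mul continuous_snd)
  set ε := (1 - α - β) / 2
  have hε : 0 < ε := by simp only [ε]; linarith
  set c := (α + ε) * ∫ x, g x ∂μ + (β + ε) * ∫ x, h x ∂μ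
  have hcoercive : ∀ p ∈ Ici (0 : ℝ × ℝ), ε * ‖p‖ + c ≤ D p := by
    rintro p ⟨hp₁ : (0 : ℝ) ≤ p.1, hp₂ : (0 : ℝ) ≤ p.2⟩
    have := le_integral_adjustedMax (μ := μ) hg hh (w₁ := α + ε) (w₂ := β + ε) (by linarith)
      (by linarith) (by simp only [ε]; linarith) p.1 p.2
    have hnorm : ‖p‖ ≤ p.1 + p.2 := by
      rw [Prod.norm_def, Real.norm_of_nonneg hp₁, Real.norm_of_nonneg hp₂]
      exact max_le (by linarith) (by linarith)
    simp only [D, dualFn, c] at this ⊢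
    nlinarith
  have htends : Tendsto (fun p : ℝ × ℝ => ε * ‖p‖ + c) (cocompact _) atTop :=
    tendsto_atTop_add_const_right _ c (tendsto_norm_cocompact_atTop.const_mul_atTop hε)
  refine hD.continuousOn.exists_isMinOn' isClosed_Ici (mem_Ici.2 le_rfl) ?_
  filter_upwards [(htends.eventually_ge_atTop (D 0)).filter_mono inf_le_left,
    mem_inf_of_right (mem_principal_self _)] with p hp hp₀
  exact hp.trans (hcoercive p hp₀)

/-- With both multipliers large, nobody keeps the item, and the split is set by the quantile
`c` of `g - h` with `μ {g - h ≤ c} = β`. -/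
theorem exists_isShadowPrice_of_add_eq_one (hg : Measurable g) (hh : Measurable h) {C₁ C₂ : ℝ}
    (hgC : ∀ x, |g x| ≤ C₁) (hhC : ∀ x, |h x| ≤ C₂)
    (hgh_atom : ∀ c, μ {x | g x - h x = c} = 0) {α β : ℝ} (hα : 0 ≤ α) (hβ : 0 ≤ β)
    (hαβ : α + β = 1) : ∃ l m, IsShadowPrice μ g h α l m ∧ IsShadowPrice μ h g β m l := by
  have hbound : ∀ x, (-|C₁| ≤ g x ∧ g x ≤ |C₁|) ∧ (-|C₂| ≤ h x ∧ h x ≤ |C₂|) := fun x =>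
    ⟨abs_le.1 ((hgC x).trans (le_abs_self C₁)), abs_le.1 ((hhC x).trans (le_abs_self C₂))⟩
  set F : ℝ → ℝ := fun c => μ.real {x | g x - h x ≤ c}
  have hF : Continuous F := continuous_iff_continuousAt.2 fun c =>
    continuousAt_measureReal_le (k := fun x => g x - h x) (hg.sub hh) (hgh_atom c)
  set B := |C₁| + |C₂| + 1
  have hB : |C₁| + |C₂| < B := by simp only [B]; linarith
  have hF_bot : F (-B) = 0 := by
    simp only [F]
    rw [show {x | g x - h x ≤ -B} = ∅ from eq_empty_of_forall_notMem fun x (hx : g x - h x ≤ -B) =>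
      by linarith [hbound x], measureReal_empty]
  have hF_top : F B = 1 := by
    simp only [F]
    rw [show {x | g x - h x ≤ B} = univ from eq_univ_of_forall fun x =>
      show g x - h x ≤ B by linarith [hbound x], probReal_univ]
  obtain ⟨c, hc, hFc⟩ :=
    intermediate_value_Icc (by linarith [abs_nonneg C₁, abs_nonneg C₂] : -B ≤ B) hF.continuousOn ⟨hF_bot ▸ hβ, hF_top ▸ by linarith⟩
  set S₁ := winRegion g h (2 * B) (2 * B + c)
  set S₂ := winRegion h g (2 * B + c) (2 * B)
  have hS₂ : S₂ = {x | g x - h x ≤ c} := by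
    ext x
    simp only [S₂, winRegion, mem_ofPred_eq]
    rw [max_eq_left (by linarith [hbound x, abs_nonneg C₂])]
    constructor <;> intro <;> linarith
  have hcover : S₁ ∪ S₂ = univ := by
    refine eq_univ_of_forall fun x => ?_
    simp only [S₁, S₂, winRegion, mem_union, mem_ofPred_eq]
    rw [max_eq_left (by linarith [hbound x, hc.1, abs_nonneg C₁]),
      max_eq_left (by linarith [hbound x, abs_nonneg C₂])]
    exact le_total _ _
  have hinter : μ.real (S₁ ∩ S₂) = 0 := by
    rw [measureReal_def, measure_winRegion_inter_winRegion (by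
      rw [show 2 * B + c - 2 * B = c by ring]; exact hgh_atom c), ENNReal.toReal_zero]
  have hsum := measureReal_union_add_inter (μ := μ) (s := S₁)
    (measurableSet_winRegion hh hg (2 * B + c) (2 * B))
  rw [hcover, probReal_univ, hinter] at hsum
  have hμS₂ : μ.real S₂ = β := hS₂ ▸ hFc
  have hμS₁ : μ.real S₁ = α := by linarith
  exact ⟨2 * B, 2 * B + c, ⟨by linarith [abs_nonneg C₁, abs_nonneg C₂], hμS₁.ge, Or.inr hμS₁⟩,
    ⟨by linarith [hc.1, abs_nonneg C₁, abs_nonneg C₂], hμS₂.ge, Or.inr hμS₂⟩⟩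

theorem exists_isShadowPrice (hg : Measurable g) (hh : Measurable h) {C₁ C₂ : ℝ}
    (hgC : ∀ x, |g x| ≤ C₁) (hhC : ∀ x, |h x| ≤ C₂) (hg_atom : ∀ c, μ {x | g x = c} = 0)
    (hh_atom : ∀ c, μ {x | h x = c} = 0) (hgh_atom : ∀ c, μ {x | g x - h x = c} = 0)
    {α β : ℝ} (hα : 0 ≤ α) (hβ : 0 ≤ β) (hαβ : α + β ≤ 1) :
    ∃ l m, IsShadowPrice μ g h α l m ∧ IsShadowPrice μ h g β m l := by
  rcases hαβ.lt_or_eq with hlt | heq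
  · have hgi : Integrable g μ := .of_bound hg.aestronglyMeasurable C₁ (.of_forall hgC)
    have hhi : Integrable h μ := .of_bound hh.aestronglyMeasurable C₂ (.of_forall hhC)
    have hhg_atom : ∀ c, μ {x | h x - g x = c} = 0 := fun c =>
      measure_mono_null (fun x (hx : h x - g x = c) => show g x - h x = -c by linarith)
        (hgh_atom (-c))
    obtain ⟨⟨l, m⟩, ⟨hl, hm⟩, hmin⟩ := exists_isMinOn_dualFn hgi hhi hα hβ hlt
    refine ⟨l, m, isShadowPrice_of_isMinOn hg hh hgi hhi hl (hg_atom _) (hgh_atom _)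
      fun r hr => hmin (show (r, m) ∈ Ici 0 from ⟨hr, hm⟩),
      isShadowPrice_of_isMinOn hh hg hhi hgi (β := α) hm (hh_atom _) (hhg_atom _) fun r hr => ?_⟩
    simpa only [mem_ofPred_eq, dualFn_comm] using hmin (show (l, r) ∈ Ici 0 from ⟨hl, hr⟩)
  · exact exists_isShadowPrice_of_add_eq_one hg hh hgC hhC hgh_atom hα hβ heq

theorem exists_ae_eq_winRegion_of_optimal (hg : Measurable g) (hh : Measurable h) {C₁ C₂ : ℝ}
    (hgC : ∀ x, |g x| ≤ C₁) (hhC : ∀ x, |h x| ≤ C₂) (hg_atom : ∀ c, μ {x | g x = c} = 0)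
    (hh_atom : ∀ c, μ {x | h x = c} = 0) (hgh_atom : ∀ c, μ {x | g x - h x = c} = 0)
    {α β : ℝ} (hα : 0 ≤ α) (hβ : 0 ≤ β) (hαβ : α + β ≤ 1)
    {G₁ G₂ : Set X} (hG₁ : MeasurableSet G₁) (hG₂ : MeasurableSet G₂) (hdisj : Disjoint G₁ G₂)
    (hfair₁ : α ≤ μ.real G₁) (hfair₂ : β ≤ μ.real G₂)
    (hopt : ∀ A B, MeasurableSet A → MeasurableSet B → Disjoint A B → α ≤ μ.real A →
      β ≤ μ.real B → virtualSurplus μ g h A B ≤ virtualSurplus μ g h G₁ G₂) :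
    ∃ l m, 0 ≤ l ∧ 0 ≤ m ∧ G₁ =ᵐ[μ] winRegion g h l m ∧ G₂ =ᵐ[μ] winRegion h g m l := by
  obtain ⟨l, m, hl, hm⟩ :=
    exists_isShadowPrice hg hh hgC hhC hg_atom hh_atom hgh_atom hα hβ hαβ
  exact ⟨l, m, hl.1, hm.1, ae_eq_winRegion_of_optimal hg hh
    (.of_bound hg.aestronglyMeasurable C₁ (.of_forall hgC))
    (.of_bound hh.aestronglyMeasurable C₂ (.of_forall hhC)) (hg_atom _) (hh_atom _) (hgh_atom _)
    hl hm hG₁ hG₂ hdisj hfair₁ hfair₂ hopt⟩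

end FairAllocation

theorem exists_measurable_bounded_ae_eq_of_strictMonoOn {ν : Measure ℝ} [IsProbabilityMeasure ν]
    {a b : ℝ} (hν : ν ≪ volume.restrict (Icc a b)) {φ : ℝ → ℝ} (hφ : StrictMonoOn φ (Icc a b)) :
    ∃ ψ : ℝ → ℝ, Measurable ψ ∧ (∃ C, ∀ x, |ψ x| ≤ C) ∧ (∀ᵐ x ∂ν, ψ x = φ x) ∧
      ∀ c, ν {x | ψ x = c} = 0 := by
  have hab : a ≤ b := by
    by_contra hba
    have := hν (s := univ) (by rw [Icc_eq_empty hba, Measure.restrict_empty]; rfl)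
    simp at this
  set ψ : ℝ → ℝ := IccExtend hab fun x => φ x
  have hψφ : ∀ x ∈ Icc a b, ψ x = φ x := fun x hx => IccExtend_of_mem hab _ hx
  refine ⟨ψ, (Monotone.IccExtend hab (monotoneOn_iff_monotone.1 hφ.monotoneOn)).measurable,
    ⟨max |φ a| |φ b|, fun x => abs_le_max_abs_abs
      (hφ.monotoneOn (left_mem_Icc.2 hab) (projIcc a b hab x).2 (projIcc a b hab x).2.1)
      (hφ.monotoneOn (projIcc a b hab x).2 (right_mem_Icc.2 hab) (projIcc a b hab x).2.2)⟩,
    ((ae_restrict_mem measurableSet_Icc).filter_mono hν.ae_le).mono hψφ, fun c => hν ?_⟩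
  rw [Measure.restrict_apply' measurableSet_Icc]
  refine Set.Subsingleton.measure_zero ?_ _
  rintro x ⟨hx, hxI⟩ y ⟨hy, hyI⟩
  refine hφ.injOn hxI hyI ?_
  rw [← hψφ x hxI, ← hψφ y hyI]
  exact hx.trans hy.symm

theorem measure_prod_setOf_sub_eq_zero {α β : Type*} [MeasurableSpace α] [MeasurableSpace β]
    {ν₁ : Measure α} {ν₂ : Measure β} [SFinite ν₂] {ψ₁ : α → ℝ} {ψ₂ : β → ℝ}
    (hψ₁ : Measurable ψ₁) (hψ₂ : Measurable ψ₂) (hatom : ∀ c, ν₂ {y | ψ₂ y = c} = 0) (c : ℝ) :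
    (ν₁.prod ν₂) {v | ψ₁ v.1 - ψ₂ v.2 = c} = 0 := by
  refine (Measure.measure_prod_null (measurableSet_eq_fun (by fun_prop) measurable_const)).2
    (Eventually.of_forall fun x => show ν₂ _ = 0 from ?_)
  convert hatom (ψ₁ x - c) using 2
  ext y
  simp only [mem_preimage, mem_ofPred_eq]
  constructor <;> intro <;> linarith

theorem static_fair_allocation_structure_general
    (a₁ b₁ a₂ b₂ : ℝ) (f₁ f₂ : ℝ → ℝ)
    (μ₁ μ₂ : Measure ℝ)
    (hμ₁ : μ₁ = (volume.restrict (Set.Icc a₁ b₁)).withDensity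
      fun x => ENNReal.ofReal (f₁ x))
    (hμ₂ : μ₂ = (volume.restrict (Set.Icc a₂ b₂)).withDensity
      fun x => ENNReal.ofReal (f₂ x))
    (hp₁ : IsProbabilityMeasure μ₁) (hp₂ : IsProbabilityMeasure μ₂)
    (φ₁ φ₂ : ℝ → ℝ)
    (hφ₁m : StrictMonoOn φ₁ (Set.Icc a₁ b₁)) (hφ₂m : StrictMonoOn φ₂ (Set.Icc a₂ b₂))
    (α₁ α₂ : ℝ) (hα₁ : 0 ≤ α₁) (hα₂ : 0 ≤ α₂) (hα : α₁ + α₂ ≤ 1)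
    (G₁ G₂ : Set (ℝ × ℝ))
    (hG₁ : MeasurableSet G₁) (hG₂ : MeasurableSet G₂) (hdisj : Disjoint G₁ G₂)
    (hfair₁ : ENNReal.ofReal α₁ ≤ (μ₁.prod μ₂) G₁)
    (hfair₂ : ENNReal.ofReal α₂ ≤ (μ₁.prod μ₂) G₂)
    (hopt : ∀ G₁' G₂' : Set (ℝ × ℝ), MeasurableSet G₁' → MeasurableSet G₂' →
      Disjoint G₁' G₂' →
      ENNReal.ofReal α₁ ≤ (μ₁.prod μ₂) G₁' → ENNReal.ofReal α₂ ≤ (μ₁.prod μ₂) G₂' →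
      (∫ v in G₁', φ₁ v.1 ∂(μ₁.prod μ₂)) + (∫ v in G₂', φ₂ v.2 ∂(μ₁.prod μ₂))
        ≤ (∫ v in G₁, φ₁ v.1 ∂(μ₁.prod μ₂)) + (∫ v in G₂, φ₂ v.2 ∂(μ₁.prod μ₂))) :
    ∃ η₁ η₂ γ : ℝ, 0 ≤ η₁ ∧ 0 ≤ η₂ ∧ η₂ = η₁ + γ ∧
      (μ₁.prod μ₂)
        (symmDiff G₁ {v : ℝ × ℝ | φ₂ v.2 + γ ≤ φ₁ v.1 ∧ -η₁ ≤ φ₁ v.1}) = 0 ∧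
      (μ₁.prod μ₂)
        (symmDiff G₂ {v : ℝ × ℝ | φ₁ v.1 - γ ≤ φ₂ v.2 ∧ -η₂ ≤ φ₂ v.2}) = 0 := by
  obtain ⟨ψ₁, hψ₁, ⟨C₁, hC₁⟩, hψ₁φ, hψ₁_atom⟩ := exists_measurable_bounded_ae_eq_of_strictMonoOn
    (hμ₁ ▸ withDensity_absolutelyContinuous _ _) hφ₁m
  obtain ⟨ψ₂, hψ₂, ⟨C₂, hC₂⟩, hψ₂φ, hψ₂_atom⟩ := exists_measurable_bounded_ae_eq_of_strictMonoOn
    (hμ₂ ▸ withDensity_absolutelyContinuous _ _) hφ₂m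
  set μ := μ₁.prod μ₂
  set g₁ : ℝ × ℝ → ℝ := fun v => ψ₁ v.1
  set g₂ : ℝ × ℝ → ℝ := fun v => ψ₂ v.2
  have hg₁ : Measurable g₁ := hψ₁.comp measurable_fst
  have hg₂ : Measurable g₂ := hψ₂.comp measurable_snd
  have hg₁_atom : ∀ c, μ {v | g₁ v = c} = 0 := fun c =>
    Measure.quasiMeasurePreserving_fst.preimage_null (hψ₁_atom c)
  have hg₂_atom : ∀ c, μ {v | g₂ v = c} = 0 := fun c =>
    Measure.quasiMeasurePreserving_snd.preimage_null (hψ₂_atom c)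
  have hg₁₂_atom := measure_prod_setOf_sub_eq_zero (ν₁ := μ₁) hψ₁ hψ₂ hψ₂_atom
  have hae : ∀ᵐ v ∂μ, g₁ v = φ₁ v.1 ∧ g₂ v = φ₂ v.2 :=
    (Measure.quasiMeasurePreserving_fst.ae hψ₁φ).and (Measure.quasiMeasurePreserving_snd.ae hψ₂φ)
  have hsurplus : ∀ A B, virtualSurplus μ g₁ g₂ A B
      = ∫ v in A, φ₁ v.1 ∂μ + ∫ v in B, φ₂ v.2 ∂μ := fun A B =>
    congrArg₂ (· + ·) (integral_congr_ae (ae_restrict_of_ae (hae.mono fun _ => And.left)))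
      (integral_congr_ae (ae_restrict_of_ae (hae.mono fun _ => And.right)))
  have hreal : ∀ α A, ENNReal.ofReal α ≤ μ A ↔ α ≤ μ.real A := fun α A =>
    ENNReal.ofReal_le_iff_le_toReal (measure_ne_top μ A)
  obtain ⟨l₁, l₂, hl₁, hl₂, hG₁S, hG₂S⟩ := exists_ae_eq_winRegion_of_optimal hg₁ hg₂
    (fun v => hC₁ v.1) (fun v => hC₂ v.2) hg₁_atom hg₂_atom hg₁₂_atom hα₁ hα₂ hα hG₁ hG₂ hdisj
    ((hreal _ _).1 hfair₁) ((hreal _ _).1 hfair₂) fun A B hA hB hAB h₁ h₂ => by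
      simpa only [hsurplus] using hopt A B hA hB hAB ((hreal _ _).2 h₁) ((hreal _ _).2 h₂)
  refine ⟨l₁, l₂, l₂ - l₁, hl₁, hl₂, by ring, measure_symmDiff_eq_zero_iff.2 (hG₁S.trans ?_),
    measure_symmDiff_eq_zero_iff.2 (hG₂S.trans ?_)⟩ <;>
  · refine eventuallyEq_set.2 (hae.mono fun v ⟨h₁, h₂⟩ => ?_)
    simp only [winRegion, mem_ofPred_eq, max_le_iff, h₁, h₂]
    constructor <;> rintro ⟨_, _⟩ <;> constructor <;> linarith

/-- **Structure of the optimal static fair allocation (group level).**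
Let `μ₁, μ₂` be Borel probability measures on compact intervals `[a₁,b₁]`, `[a₂,b₂]` with
continuous strictly positive densities `f₁, f₂`, let `μ = μ₁ ⊗ μ₂`, let `φ₁, φ₂` be
continuous strictly increasing virtual value functions, and let `α₁, α₂ ≥ 0` with
`α₁ + α₂ ≤ 1`. If the pair of disjoint Borel sets `(G₁, G₂)` with `μ Gᵢ ≥ αᵢ` maximizes
the seller's virtual surplus `W(G₁,G₂) = ∫_{G₁} φ₁(v₁) dμ + ∫_{G₂} φ₂(v₂) dμ` over all
such pairs, then there exist `η₁, η₂ ≥ 0` and `γ` with `η₂ = η₁ + γ` such that, up to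
`μ`-null sets, `G₁ = {φ₁(v₁) ≥ φ₂(v₂) + γ ∧ φ₁(v₁) ≥ -η₁}` and
`G₂ = {φ₂(v₂) ≥ φ₁(v₁) - γ ∧ φ₂(v₂) ≥ -η₂}`. -/
theorem static_fair_allocation_structure
    (a₁ b₁ a₂ b₂ : ℝ) (f₁ f₂ : ℝ → ℝ)
    (hf₁c : ContinuousOn f₁ (Set.Icc a₁ b₁)) (hf₂c : ContinuousOn f₂ (Set.Icc a₂ b₂))
    (hf₁pos : ∀ x ∈ Set.Icc a₁ b₁, 0 < f₁ x) (hf₂pos : ∀ x ∈ Set.Icc a₂ b₂, 0 < f₂ x)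
    (μ₁ μ₂ : Measure ℝ)
    (hμ₁ : μ₁ = (volume.restrict (Set.Icc a₁ b₁)).withDensity
      fun x => ENNReal.ofReal (f₁ x))
    (hμ₂ : μ₂ = (volume.restrict (Set.Icc a₂ b₂)).withDensity
      fun x => ENNReal.ofReal (f₂ x))
    (hp₁ : IsProbabilityMeasure μ₁) (hp₂ : IsProbabilityMeasure μ₂)
    (φ₁ φ₂ : ℝ → ℝ)
    (hφ₁c : ContinuousOn φ₁ (Set.Icc a₁ b₁)) (hφ₂c : ContinuousOn φ₂ (Set.Icc a₂ b₂))
    (hφ₁m : StrictMonoOn φ₁ (Set.Icc a₁ b₁)) (hφ₂m : StrictMonoOn φ₂ (Set.Icc a₂ b₂))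
    (α₁ α₂ : ℝ) (hα₁ : 0 ≤ α₁) (hα₂ : 0 ≤ α₂) (hα : α₁ + α₂ ≤ 1)
    (G₁ G₂ : Set (ℝ × ℝ))
    (hG₁ : MeasurableSet G₁) (hG₂ : MeasurableSet G₂) (hdisj : Disjoint G₁ G₂)
    (hfair₁ : ENNReal.ofReal α₁ ≤ (μ₁.prod μ₂) G₁)
    (hfair₂ : ENNReal.ofReal α₂ ≤ (μ₁.prod μ₂) G₂)
    (hopt : ∀ G₁' G₂' : Set (ℝ × ℝ), MeasurableSet G₁' → MeasurableSet G₂' →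
      Disjoint G₁' G₂' →
      ENNReal.ofReal α₁ ≤ (μ₁.prod μ₂) G₁' → ENNReal.ofReal α₂ ≤ (μ₁.prod μ₂) G₂' →
      (∫ v in G₁', φ₁ v.1 ∂(μ₁.prod μ₂)) + (∫ v in G₂', φ₂ v.2 ∂(μ₁.prod μ₂))
        ≤ (∫ v in G₁, φ₁ v.1 ∂(μ₁.prod μ₂)) + (∫ v in G₂, φ₂ v.2 ∂(μ₁.prod μ₂))) :
    ∃ η₁ η₂ γ : ℝ, 0 ≤ η₁ ∧ 0 ≤ η₂ ∧ η₂ = η₁ + γ ∧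
      (μ₁.prod μ₂)
        (symmDiff G₁ {v : ℝ × ℝ | φ₂ v.2 + γ ≤ φ₁ v.1 ∧ -η₁ ≤ φ₁ v.1}) = 0 ∧
      (μ₁.prod μ₂)
        (symmDiff G₂ {v : ℝ × ℝ | φ₁ v.1 - γ ≤ φ₂ v.2 ∧ -η₂ ≤ φ₂ v.2}) = 0 :=
  static_fair_allocation_structure_general a₁ b₁ a₂ b₂ f₁ f₂ μ₁ μ₂ hμ₁ hμ₂ hp₁ hp₂ φ₁ φ₂ hφ₁m hφ₂m
    α₁ α₂ hα₁ hα₂ hα G₁ G₂ hG₁ hG₂ hdisj hfair₁ hfair₂ hopt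
end

section
/- Let δ ∈ (0,1), let T₀ ≤ T be positive integers, let ε ∈ (0,1) with δ^{T₀} ≤ ε, let α be a real number with ε ≤ α ≤ 1, and let x₁, …, x_T ∈ [0,1] satisfy Σ_{t=1}^{T} δ^{t−1} x_t ≥ α · Σ_{t=0}^{T−1} δ^t. Then Σ_{t=1}^{T₀} δ^{t−1} x_t ≥ (α − ε) · Σ_{t=0}^{T₀−1} δ^t. -/
/-!
Split both discounted sums at `T₀`. Since `x ≤ 1`, the rounds after `T₀` contribute at most
their total weight, so the head keeps `α` times its own weight minus `1 - α` times the tail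
weight. The tail weight is at most `δ^{T₀} / (1 - δ)` and the head weight is
`(1 - δ^{T₀}) / (1 - δ)`, so `δ^{T₀} ≤ ε ≤ α` makes the loss at most `ε` times the head weight.
-/

open Finset

theorem sub_mul_sum_Ico_le_sum_range_mul_of_le_sum_range_mul
    {R : Type*} [CommRing R] [PartialOrder R] [IsOrderedRing R]
    {w x : ℕ → R} {α : R} {m n : ℕ} (hmn : m ≤ n)
    (hw : ∀ t ∈ Ico m n, 0 ≤ w t) (hx : ∀ t ∈ Ico m n, x t ≤ 1)
    (h : α * ∑ t ∈ range n, w t ≤ ∑ t ∈ range n, w t * x t) :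
    α * ∑ t ∈ range m, w t - (1 - α) * ∑ t ∈ Ico m n, w t ≤ ∑ t ∈ range m, w t * x t := by
  have htail : ∑ t ∈ Ico m n, w t * x t ≤ ∑ t ∈ Ico m n, w t :=
    sum_le_sum fun t ht => mul_le_of_le_one_right (hw t ht) (hx t ht)
  rw [← sum_range_add_sum_Ico _ hmn, ← sum_range_add_sum_Ico _ hmn] at h
  linear_combination h + htail

theorem one_sub_mul_geom_sum_Ico_le_mul_geom_sum_range
    {K : Type*} [Field K] [LinearOrder K] [IsStrictOrderedRing K]
    {δ ε α : K} {m n : ℕ} (hδ₀ : 0 ≤ δ) (hδ₁ : δ < 1)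
    (hδm : δ ^ m ≤ ε) (hεα : ε ≤ α) (hα : α ≤ 1) :
    (1 - α) * ∑ t ∈ Ico m n, δ ^ t ≤ ε * ∑ t ∈ range m, δ ^ t := by
  have hpos : 0 < 1 - δ := sub_pos.2 hδ₁
  have hhead : ∑ t ∈ range m, δ ^ t = (1 - δ ^ m) / (1 - δ) := by
    rw [eq_div_iff hpos.ne', mul_comm, mul_neg_geom_sum]
  calc (1 - α) * ∑ t ∈ Ico m n, δ ^ t
      ≤ (1 - ε) * (δ ^ m / (1 - δ)) := by
        gcongr
        · linarith
        · exact geom_sum_Ico_le_of_lt_one hδ₀ hδ₁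
    _ ≤ ε * ((1 - δ ^ m) / (1 - δ)) := by
        rw [← mul_div_assoc, ← mul_div_assoc]
        exact div_le_div_of_nonneg_right (by linarith) hpos.le
    _ = ε * ∑ t ∈ range m, δ ^ t := by rw [hhead]

theorem early_stopping_fairness_general
    (δ ε α : ℝ) (hδ : δ ∈ Set.Ioo (0 : ℝ) 1)
    (T₀ T : ℕ) (hT₀T : T₀ ≤ T)
    (hδT₀ : δ ^ T₀ ≤ ε) (hεα : ε ≤ α) (hα : α ≤ 1)
    (x : ℕ → ℝ) (hx : ∀ t, 1 ≤ t → t ≤ T → x t ∈ Set.Icc (0 : ℝ) 1)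
    (hfair : α * ∑ t ∈ Finset.range T, δ ^ t ≤ ∑ t ∈ Finset.range T, δ ^ t * x (t + 1)) :
    (α - ε) * ∑ t ∈ Finset.range T₀, δ ^ t ≤ ∑ t ∈ Finset.range T₀, δ ^ t * x (t + 1) := by
  obtain ⟨hδ₀, hδ₁⟩ := hδ
  have htruncated := sub_mul_sum_Ico_le_sum_range_mul_of_le_sum_range_mul
    (x := fun t => x (t + 1)) hT₀T (fun t _ => (pow_pos hδ₀ t).le)
    (fun t ht => (hx (t + 1) (Nat.le_add_left 1 t) (mem_Ico.1 ht).2).2) hfair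
  have hloss := one_sub_mul_geom_sum_Ico_le_mul_geom_sum_range (n := T) hδ₀.le hδ₁ hδT₀ hεα hα
  linarith

/-- **Early stopping preserves approximate fairness.**
If a `[0,1]`-valued allocation sequence satisfies the discounted fairness constraint at
level `α` over `T` rounds, and `T₀ ≤ T` is such that `δ^{T₀} ≤ ε`, then the truncation to
the first `T₀` rounds satisfies the discounted fairness constraint at level `α - ε`. -/
theorem early_stopping_fairness
    (δ ε α : ℝ) (hδ : δ ∈ Set.Ioo (0 : ℝ) 1) (hε : ε ∈ Set.Ioo (0 : ℝ) 1)
    (T₀ T : ℕ) (hT₀ : 0 < T₀) (hT₀T : T₀ ≤ T)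
    (hδT₀ : δ ^ T₀ ≤ ε) (hεα : ε ≤ α) (hα : α ≤ 1)
    (x : ℕ → ℝ) (hx : ∀ t, 1 ≤ t → t ≤ T → x t ∈ Set.Icc (0 : ℝ) 1)
    (hfair : α * ∑ t ∈ Finset.range T, δ ^ t ≤ ∑ t ∈ Finset.range T, δ ^ t * x (t + 1)) :
    (α - ε) * ∑ t ∈ Finset.range T₀, δ ^ t ≤ ∑ t ∈ Finset.range T₀, δ ^ t * x (t + 1) :=
  early_stopping_fairness_general δ ε α hδ T₀ T hT₀T hδT₀ hεα hα x hx hfair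
end

section
/- Let δ ∈ (0,1), let T₀ ≤ T be positive integers, let ε ∈ (0,1) with δ^{T₀} ≤ ε, let α be a real number with ε ≤ α ≤ 1, and let x₁, …, x_T ∈ [0,1] satisfy Σ_{t=1}^{T₀} δ^{t−1} x_t ≥ (α − ε) · Σ_{t=0}^{T₀−1} δ^t. Then Σ_{t=1}^{T} δ^{t−1} x_t ≥ (1 − ε)(α − ε) · Σ_{t=0}^{T−1} δ^t. -/
/-! Splitting the discounted horizon after `T₀` rounds, the tail `∑_{t=T₀}^{T-1} δ^t` equals
`δ^{T₀}` times a truncated geometric sum, so it is at most `ε ∑_{t<T} δ^t`. Hence the first `T₀`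
rounds carry at least a `(1 - ε)` share of the total discount weight, and the allocation, being
nonnegative, only gains from the later rounds. -/

section GeomSum

variable {R : Type*} [CommRing R] [PartialOrder R] [IsOrderedRing R]

theorem geom_sum_le_geom_sum_add_pow_mul {δ : R} (hδ : 0 ≤ δ) {m n : ℕ} (hmn : m ≤ n) :
    ∑ t ∈ Finset.range n, δ ^ t
      ≤ ∑ t ∈ Finset.range m, δ ^ t + δ ^ m * ∑ t ∈ Finset.range n, δ ^ t := by
  obtain ⟨k, rfl⟩ := Nat.exists_eq_add_of_le hmn
  have htail : ∑ t ∈ Finset.range k, δ ^ t ≤ ∑ t ∈ Finset.range (m + k), δ ^ t :=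
    Finset.sum_le_sum_of_subset_of_nonneg (Finset.range_subset_range.2 (Nat.le_add_left k m))
      fun t _ _ => pow_nonneg hδ t
  calc ∑ t ∈ Finset.range (m + k), δ ^ t
      = ∑ t ∈ Finset.range m, δ ^ t + δ ^ m * ∑ t ∈ Finset.range k, δ ^ t := by
        simp only [Finset.sum_range_add, pow_add, Finset.mul_sum]
    _ ≤ _ := by gcongr

theorem one_sub_mul_geom_sum_le {δ ε : R} (hδ : 0 ≤ δ) {m n : ℕ} (hmn : m ≤ n)
    (hδm : δ ^ m ≤ ε) :
    (1 - ε) * ∑ t ∈ Finset.range n, δ ^ t ≤ ∑ t ∈ Finset.range m, δ ^ t := by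
  have hsum : 0 ≤ ∑ t ∈ Finset.range n, δ ^ t := Finset.sum_nonneg fun t _ => pow_nonneg hδ t
  linear_combination geom_sum_le_geom_sum_add_pow_mul hδ hmn
    + mul_le_mul_of_nonneg_right hδm hsum

end GeomSum

theorem approximation_fairness_guarantee_general
    (δ ε α : ℝ) (hδ : δ ∈ Set.Ioo (0 : ℝ) 1)
    (T₀ T : ℕ) (hT₀T : T₀ ≤ T)
    (hδT₀ : δ ^ T₀ ≤ ε) (hεα : ε ≤ α)
    (x : ℕ → ℝ) (hx : ∀ t, 1 ≤ t → t ≤ T → x t ∈ Set.Icc (0 : ℝ) 1)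
    (hfair : (α - ε) * ∑ t ∈ Finset.range T₀, δ ^ t
      ≤ ∑ t ∈ Finset.range T₀, δ ^ t * x (t + 1)) :
    (1 - ε) * (α - ε) * ∑ t ∈ Finset.range T, δ ^ t
      ≤ ∑ t ∈ Finset.range T, δ ^ t * x (t + 1) := by
  have hδ0 : 0 ≤ δ := hδ.1.le
  have hlater : ∑ t ∈ Finset.range T₀, δ ^ t * x (t + 1)
      ≤ ∑ t ∈ Finset.range T, δ ^ t * x (t + 1) :=
    Finset.sum_le_sum_of_subset_of_nonneg (Finset.range_subset_range.2 hT₀T) fun t ht _ =>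
      mul_nonneg (pow_nonneg hδ0 t) (hx (t + 1) t.succ_pos (Finset.mem_range.1 ht)).1
  calc (1 - ε) * (α - ε) * ∑ t ∈ Finset.range T, δ ^ t
      = (α - ε) * ((1 - ε) * ∑ t ∈ Finset.range T, δ ^ t) := by ring
    _ ≤ (α - ε) * ∑ t ∈ Finset.range T₀, δ ^ t :=
        mul_le_mul_of_nonneg_left (one_sub_mul_geom_sum_le hδ0 hT₀T hδT₀) (sub_nonneg.2 hεα)
    _ ≤ ∑ t ∈ Finset.range T₀, δ ^ t * x (t + 1) := hfair
    _ ≤ _ := hlater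

/-- **Fairness guarantee of the early-stopping approximation.**
If a `[0,1]`-valued allocation sequence satisfies the discounted fairness constraint at
level `α - ε` over the first `T₀` rounds, where `δ^{T₀} ≤ ε` and `T₀ ≤ T`, then over all
`T` rounds it satisfies the discounted fairness constraint at level `(1 - ε)(α - ε)`. -/
theorem approximation_fairness_guarantee
    (δ ε α : ℝ) (hδ : δ ∈ Set.Ioo (0 : ℝ) 1) (hε : ε ∈ Set.Ioo (0 : ℝ) 1)
    (T₀ T : ℕ) (hT₀ : 0 < T₀) (hT₀T : T₀ ≤ T)
    (hδT₀ : δ ^ T₀ ≤ ε) (hεα : ε ≤ α) (hα : α ≤ 1)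
    (x : ℕ → ℝ) (hx : ∀ t, 1 ≤ t → t ≤ T → x t ∈ Set.Icc (0 : ℝ) 1)
    (hfair : (α - ε) * ∑ t ∈ Finset.range T₀, δ ^ t
      ≤ ∑ t ∈ Finset.range T₀, δ ^ t * x (t + 1)) :
    (1 - ε) * (α - ε) * ∑ t ∈ Finset.range T, δ ^ t
      ≤ ∑ t ∈ Finset.range T, δ ^ t * x (t + 1) :=
  approximation_fairness_guarantee_general δ ε α hδ T₀ T hT₀T hδT₀ hεα x hx hfair
end

section
/- Let δ ∈ (0,1), let β, ε ∈ (0,1), let ℓ, m be positive integers with δ^ℓ ≥ 1 − β, set T₀ = mℓ, let T ≥ T₀ be an integer, assume δ^{T₀} ≤ ε, and let α be a real number with ε ≤ α ≤ 1. Suppose x₁, …, x_T ∈ [0,1] satisfy the bucket-discounted fairness constraint Σ_{k=0}^{m−1} δ^{ℓk} · ( Σ_{t=kℓ+1}^{(k+1)ℓ} x_t ) ≥ (1 − β)(α − ε) · ℓ · Σ_{k=0}^{m−1} δ^{ℓk}. Then Σ_{t=1}^{T} δ^{t−1} x_t ≥ (1 − ε)(1 − β)²(α − ε) · Σ_{t=0}^{T−1}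 δ^t. -/
/-!
On each bucket `[kℓ, (k+1)ℓ)` the true discount `δ^t` lies between `δ^ℓ · δ^{kℓ}` and the bucket
value `δ^{kℓ}`. The lower bound, with `δ^ℓ ≥ 1 - β`, turns the bucketed constraint into a bound on
the true discounted allocation over the first `T₀` rounds, at the cost of one factor `1 - β`; the upper
bound compares `ℓ ∑ₖ δ^{ℓk}` with the true discounted horizon `∑_{t<T₀} δ^t`, at the cost of a second.
Finally the rounds after `T₀` carry at most a fraction `δ^{T₀} ≤ ε` of `∑_{t<T} δ^t`, which costs
the factor `1 - ε`.
-/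

open Finset

theorem sum_range_mul_eq_sum_sum {M : Type*} [AddCommMonoid M] (f : ℕ → M) (m ℓ : ℕ) :
    ∑ t ∈ range (m * ℓ), f t = ∑ k ∈ range m, ∑ j ∈ range ℓ, f (k * ℓ + j) := by
  induction m with
  | zero => simp
  | succ n ih => rw [sum_range_succ, ← ih, Nat.succ_mul, sum_range_add]

theorem sum_range_pow_le_add_pow_mul {δ : ℝ} (hδ : 0 ≤ δ) {n : ℕ} (T : ℕ) :
    ∑ t ∈ range T, δ ^ t ≤ ∑ t ∈ range n, δ ^ t + δ ^ n * ∑ t ∈ range T, δ ^ t := by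
  rcases le_total T n with hTn | hnT
  · have hsub := sum_le_sum_of_subset_of_nonneg (range_subset_range.mpr hTn)
      fun i _ _ ↦ pow_nonneg hδ i
    have htail : 0 ≤ δ ^ n * ∑ t ∈ range T, δ ^ t := by positivity
    linarith
  · obtain ⟨r, rfl⟩ := Nat.exists_eq_add_of_le hnT
    have htail : ∑ j ∈ range r, δ ^ j ≤ ∑ t ∈ range (n + r), δ ^ t :=
      sum_le_sum_of_subset_of_nonneg (range_subset_range.mpr (Nat.le_add_left r n))
        fun i _ _ ↦ pow_nonneg hδ i
    calc ∑ t ∈ range (n + r), δ ^ t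
        = ∑ t ∈ range n, δ ^ t + δ ^ n * ∑ j ∈ range r, δ ^ j := by
          simp only [sum_range_add, pow_add, mul_sum]
      _ ≤ _ := by gcongr

theorem one_sub_mul_sum_range_pow_le {δ ε : ℝ} (hδ : 0 ≤ δ) {n T : ℕ} (hδn : δ ^ n ≤ ε) :
    (1 - ε) * ∑ t ∈ range T, δ ^ t ≤ ∑ t ∈ range n, δ ^ t := by
  have hsplit := sum_range_pow_le_add_pow_mul hδ (n := n) T
  have htail : δ ^ n * ∑ t ∈ range T, δ ^ t ≤ ε * ∑ t ∈ range T, δ ^ t := by gcongr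
  linarith

section Buckets

variable {δ : ℝ} {ℓ : ℕ}

theorem pow_mul_pow_le_pow_add (hδ₀ : 0 ≤ δ) (hδ₁ : δ ≤ 1) (k : ℕ) {j : ℕ} (hj : j ≤ ℓ) :
    δ ^ ℓ * δ ^ (ℓ * k) ≤ δ ^ (k * ℓ + j) :=
  calc δ ^ ℓ * δ ^ (ℓ * k) ≤ δ ^ j * δ ^ (k * ℓ) := by
        rw [mul_comm ℓ k]
        exact mul_le_mul_of_nonneg_right (pow_le_pow_of_le_one hδ₀ hδ₁ hj) (by positivity)
    _ = δ ^ (k * ℓ + j) := by rw [pow_add, mul_comm]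

theorem sum_range_pow_le_mul_sum_bucket (hδ₀ : 0 ≤ δ) (hδ₁ : δ ≤ 1) (m : ℕ) :
    ∑ t ∈ range (m * ℓ), δ ^ t ≤ ℓ * ∑ k ∈ range m, δ ^ (ℓ * k) := by
  rw [sum_range_mul_eq_sum_sum, mul_sum]
  refine sum_le_sum fun k _ ↦ ?_
  calc ∑ j ∈ range ℓ, δ ^ (k * ℓ + j) ≤ ∑ _j ∈ range ℓ, δ ^ (ℓ * k) :=
        sum_le_sum fun j _ ↦ pow_le_pow_of_le_one hδ₀ hδ₁ (by rw [mul_comm]; omega)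
    _ = ℓ * δ ^ (ℓ * k) := by rw [sum_const, card_range, nsmul_eq_mul]

theorem mul_sum_bucket_le_sum_range_pow_mul (hδ₀ : 0 ≤ δ) (hδ₁ : δ ≤ 1) {c : ℝ} (hc : c ≤ δ ^ ℓ) {m : ℕ} {y : ℕ → ℝ} (hy : ∀ t < m * ℓ, 0 ≤ y t) :
    c * ∑ k ∈ range m, δ ^ (ℓ * k) * ∑ j ∈ range ℓ, y (k * ℓ + j)
      ≤ ∑ t ∈ range (m * ℓ), δ ^ t * y t := by
  rw [sum_range_mul_eq_sum_sum, mul_sum]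
  refine sum_le_sum fun k hk ↦ ?_
  rw [← mul_assoc, mul_sum]
  refine sum_le_sum fun j hj ↦ ?_
  have hk : k < m := mem_range.mp hk
  have hj : j < ℓ := mem_range.mp hj
  have hkj : k * ℓ + j < m * ℓ := by nlinarith
  have hweight : c * δ ^ (ℓ * k) ≤ δ ^ (k * ℓ + j) :=
    (mul_le_mul_of_nonneg_right hc (by positivity)).trans (pow_mul_pow_le_pow_add hδ₀ hδ₁ k hj.le)
  exact mul_le_mul_of_nonneg_right hweight (hy _ hkj)

end Buckets
theorem bucketed_approximation_fairness_general
    (δ β ε α : ℝ) (hδ : δ ∈ Set.Ioo (0 : ℝ) 1) (hβ : β ∈ Set.Ioo (0 : ℝ) 1)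
    (ℓ m T₀ T : ℕ) (hδℓ : 1 - β ≤ δ ^ ℓ)
    (hT₀ : T₀ = m * ℓ) (hT₀T : T₀ ≤ T) (hδT₀ : δ ^ T₀ ≤ ε) (hεα : ε ≤ α)
    (x : ℕ → ℝ) (hx : ∀ t, 1 ≤ t → t ≤ T → x t ∈ Set.Icc (0 : ℝ) 1)
    (hfair : (1 - β) * (α - ε) * (ℓ : ℝ) * ∑ k ∈ Finset.range m, δ ^ (ℓ * k)
      ≤ ∑ k ∈ Finset.range m, δ ^ (ℓ * k) * ∑ j ∈ Finset.range ℓ, x (k * ℓ + j + 1)) :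
    (1 - ε) * (1 - β) ^ 2 * (α - ε) * ∑ t ∈ Finset.range T, δ ^ t
      ≤ ∑ t ∈ Finset.range T, δ ^ t * x (t + 1) := by
  obtain ⟨hδ₀, hδ₁⟩ := hδ
  subst hT₀
  have hx₀ : ∀ t < T, 0 ≤ x (t + 1) := fun t ht ↦ (hx (t + 1) (by omega) (by omega)).1
  have hβ₀ : 0 ≤ 1 - β := by linarith [hβ.2]
  have hc : 0 ≤ (1 - β) ^ 2 * (α - ε) := mul_nonneg (sq_nonneg _) (by linarith)
  calc (1 - ε) * (1 - β) ^ 2 * (α - ε) * ∑ t ∈ range T, δ ^ t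
      = (1 - β) ^ 2 * (α - ε) * ((1 - ε) * ∑ t ∈ range T, δ ^ t) := by ring
    _ ≤ (1 - β) ^ 2 * (α - ε) * ∑ t ∈ range (m * ℓ), δ ^ t := by
        gcongr; exact one_sub_mul_sum_range_pow_le hδ₀.le hδT₀
    _ ≤ (1 - β) ^ 2 * (α - ε) * (ℓ * ∑ k ∈ range m, δ ^ (ℓ * k)) := by
        gcongr; exact sum_range_pow_le_mul_sum_bucket hδ₀.le hδ₁.le m
    _ = (1 - β) * ((1 - β) * (α - ε) * ℓ * ∑ k ∈ range m, δ ^ (ℓ * k)) := by ring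
    _ ≤ (1 - β) * ∑ k ∈ range m, δ ^ (ℓ * k) * ∑ j ∈ range ℓ, x (k * ℓ + j + 1) := by gcongr
    _ ≤ ∑ t ∈ range (m * ℓ), δ ^ t * x (t + 1) :=
        mul_sum_bucket_le_sum_range_pow_mul hδ₀.le hδ₁.le hδℓ fun t ht ↦ hx₀ t (by omega)
    _ ≤ ∑ t ∈ range T, δ ^ t * x (t + 1) :=
        sum_le_sum_of_subset_of_nonneg (range_subset_range.mpr hT₀T)
          fun t ht _ ↦ mul_nonneg (pow_nonneg hδ₀.le t) (hx₀ t (mem_range.mp ht))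

/-- **Fairness guarantee of the bucketed (constant-factor) approximation scheme.**
Suppose the first `T₀ = m·ℓ` rounds are partitioned into `m` buckets of `ℓ` rounds with
`δ^ℓ ≥ 1 - β` and `δ^{T₀} ≤ ε`, and the `[0,1]`-valued allocation sequence `x` satisfies
the bucket-discounted fairness constraint at level `(1 - β)(α - ε)`. Then over all
`T ≥ T₀` rounds the true discounted fairness constraint holds at level
`(1 - ε)(1 - β)²(α - ε)`. -/
theorem bucketed_approximation_fairness
    (δ β ε α : ℝ) (hδ : δ ∈ Set.Ioo (0 : ℝ) 1) (hβ : β ∈ Set.Ioo (0 : ℝ) 1)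
    (hε : ε ∈ Set.Ioo (0 : ℝ) 1)
    (ℓ m T₀ T : ℕ) (hℓ : 0 < ℓ) (hm : 0 < m) (hδℓ : 1 - β ≤ δ ^ ℓ)
    (hT₀ : T₀ = m * ℓ) (hT₀T : T₀ ≤ T) (hδT₀ : δ ^ T₀ ≤ ε) (hεα : ε ≤ α) (hα : α ≤ 1)
    (x : ℕ → ℝ) (hx : ∀ t, 1 ≤ t → t ≤ T → x t ∈ Set.Icc (0 : ℝ) 1)
    (hfair : (1 - β) * (α - ε) * (ℓ : ℝ) * ∑ k ∈ Finset.range m, δ ^ (ℓ * k)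
      ≤ ∑ k ∈ Finset.range m, δ ^ (ℓ * k) * ∑ j ∈ Finset.range ℓ, x (k * ℓ + j + 1)) :
    (1 - ε) * (1 - β) ^ 2 * (α - ε) * ∑ t ∈ Finset.range T, δ ^ t
      ≤ ∑ t ∈ Finset.range T, δ ^ t * x (t + 1) :=
  bucketed_approximation_fairness_general δ β ε α hδ hβ ℓ m T₀ T hδℓ hT₀ hT₀T hδT₀ hεα x hx hfair
end
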